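/- Any n×n board with c colours can be flooded in at most 2n + √(2c)·n + c Flood-It moves. -/

import Mathlib

/-- Tiles of an `n × n` board. -/
abbrev Tile (n : ℕ) := Fin n × Fin n

/-- Two tiles are adjacent if they differ by a unit step (horizontally or vertically). -/
def adjT {n : ℕ} (p q : Tile n) : Prop :=
  ((p.1 : ℤ) - (q.1 : ℤ)).natAbs + ((p.2 : ℤ) - (q.2 : ℤ)).natAbs = 1

/-- A board assigns one of `c` colours to each tile. -/
abbrev Board (n c : ℕ) := Tile n → Fin c

/-- `SameColorConn B p q` : `q` is in the monochromatic connected region of `B`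
containing `p`. -/
def SameColorConn {n c : ℕ} (B : Board n c) (p q : Tile n) : Prop :=
  Relation.ReflTransGen (fun a b => adjT a b ∧ B a = B b) p q

open Classical in
/-- A Flood-It move: recolour the monochromatic region containing `o` with colour `k`. -/
noncomputable def flood {n c : ℕ} (B : Board n c) (o : Tile n) (k : Fin c) : Board n c :=
  fun p => if SameColorConn B o p then k else B p

/-- Play a sequence of Flood-It moves (flooding from `o`). -/
noncomputable def playMoves {n c : ℕ} (o : Tile n) : Board n c → List (Fin c) → Board n c
  | B, [] => B
  | B, k :: ks => playMoves o (flood B o k) ks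

/-- A board is flooded when it is monochromatic. -/
def Flooded {n c : ℕ} (B : Board n c) : Prop := ∀ p q : Tile n, B p = B q

/-- `floodMoves B o` : the minimum number of moves (flooding from `o`) needed to
flood the board `B`. -/
noncomputable def floodMoves {n c : ℕ} (B : Board n c) (o : Tile n) : ℕ :=
  sInf {l : ℕ | ∃ ms : List (Fin c), ms.length = l ∧ Flooded (playMoves o B ms)}

/-!
Flood the first column, then every row `k * j + k / 2` with `j ≤ n / k`, each by walking along
it one tile per move. Every tile is then within vertical distance `k / 2` of the flooded region,
and a round of moves through all `c` colours captures every neighbour of the region, so `k / 2`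
such rounds finish the board. This costs at most `n + (n / k + 1) * n + (k / 2) * c` moves, and
`k = ⌈2n / √(2c)⌉` balances the last two terms.
-/

variable {n c : ℕ}

lemma adjT_of_fst {a b : Fin n} (j : Fin n) (h : (a : ℕ) + 1 = b ∨ (b : ℕ) + 1 = a) :
    adjT (a, j) (b, j) := by
  simp only [adjT]; omega

lemma adjT_of_snd (i : Fin n) {a b : Fin n} (h : (a : ℕ) + 1 = b ∨ (b : ℕ) + 1 = a) :
    adjT (i, a) (i, b) := by
  simp only [adjT]; omega

lemma SameColorConn.color_eq {B : Board n c} {p q : Tile n} (h : SameColorConn B p q) :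
    B p = B q := by
  induction h with
  | refl => rfl
  | tail _ hstep ih => exact ih.trans hstep.2

lemma playMoves_append (o : Tile n) (B : Board n c) (ms ks : List (Fin c)) :
    playMoves o B (ms ++ ks) = playMoves o (playMoves o B ms) ks := by
  induction ms generalizing B with
  | nil => rfl
  | cons k ms ih => exact ih _

def floodRegion (B : Board n c) (o : Tile n) : Set (Tile n) := {p | SameColorConn B o p}

lemma flooded_of_univ_subset_floodRegion {B : Board n c} {o : Tile n}
    (h : Set.univ ⊆ floodRegion B o) : Flooded B := fun p q =>
  (SameColorConn.color_eq (h (Set.mem_univ p))).symm.trans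
    (SameColorConn.color_eq (h (Set.mem_univ q)))

lemma floodRegion_subset_flood (B : Board n c) (o : Tile n) (k : Fin c) :
    floodRegion B o ⊆ floodRegion (flood B o k) o := by
  intro p hp
  induction hp with
  | refl => exact .refl
  | @tail b q hob hbq ih =>
    have hb : SameColorConn B o b := hob
    have hq : SameColorConn B o q := hob.tail hbq
    exact ih.tail ⟨hbq.1, by simp [flood, hb, hq]⟩

lemma floodRegion_subset_playMoves (B : Board n c) (o : Tile n) (ms : List (Fin c)) :
    floodRegion B o ⊆ floodRegion (playMoves o B ms) o := by
  induction ms generalizing B with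
  | nil => exact subset_rfl
  | cons k ms ih => exact (floodRegion_subset_flood B o k).trans (ih _)

lemma mem_floodRegion_flood_of_adjT {B : Board n c} {o p q : Tile n}
    (hp : p ∈ floodRegion B o) (hpq : adjT p q) : q ∈ floodRegion (flood B o (B q)) o := by
  have hp' : SameColorConn B o p := hp
  by_cases hq : SameColorConn B o q
  · exact floodRegion_subset_flood B o _ hq
  · exact (floodRegion_subset_flood B o _ hp).tail ⟨hpq, by simp [flood, hp', hq]⟩

/-- The colour of `q` does not change until `q` is captured, so the move with colour `B q`
captures it at the latest. -/
lemma mem_floodRegion_playMoves_of_adjT {o p q : Tile n} (L : List (Fin c)) {B : Board n c}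
    (hL : B q ∈ L) (hp : p ∈ floodRegion B o) (hpq : adjT p q) :
    q ∈ floodRegion (playMoves o B L) o := by
  induction L generalizing B with
  | nil => simp at hL
  | cons k L ih =>
    by_cases hq : q ∈ floodRegion (flood B o k) o
    · exact floodRegion_subset_playMoves _ o L hq
    · have hk : B q ≠ k := by
        rintro rfl
        exact hq (mem_floodRegion_flood_of_adjT hp hpq)
      have hq₀ : ¬ SameColorConn B o q := fun h => hq (floodRegion_subset_flood B o k h)
      have hBq : flood B o k q = B q := by simp [flood, hq₀]
      refine ih ?_ (floodRegion_subset_flood B o k hp)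
      rw [hBq]
      exact (List.mem_cons.mp hL).resolve_left hk

variable (c) in
def CanCapture (o : Tile n) (m : ℕ) (S T : Set (Tile n)) : Prop :=
  ∀ B : Board n c, S ⊆ floodRegion B o →
    ∃ ms : List (Fin c), ms.length ≤ m ∧ T ⊆ floodRegion (playMoves o B ms) o

namespace CanCapture

variable {o : Tile n} {m m' m₁ m₂ : ℕ} {S S' T T' U : Set (Tile n)}

lemma refl (S : Set (Tile n)) : CanCapture c o 0 S S := fun _ hB => ⟨[], le_rfl, hB⟩

lemma mono (h : CanCapture c o m S T) (hm : m ≤ m') (hS : S ⊆ S') (hT : T' ⊆ T) :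
    CanCapture c o m' S' T' := fun B hB =>
  let ⟨ms, hlen, hms⟩ := h B (hS.trans hB)
  ⟨ms, hlen.trans hm, hT.trans hms⟩

lemma trans (h₁ : CanCapture c o m₁ S T) (h₂ : CanCapture c o m₂ T U) :
    CanCapture c o (m₁ + m₂) S U := by
  intro B hB
  obtain ⟨ms₁, hlen₁, hT⟩ := h₁ B hB
  obtain ⟨ms₂, hlen₂, hU⟩ := h₂ _ hT
  refine ⟨ms₁ ++ ms₂, ?_, ?_⟩
  · rw [List.length_append]; omega
  · rwa [playMoves_append]

lemma union_left (h : CanCapture c o m S T) : CanCapture c o m S (S ∪ T) := by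
  intro B hB
  obtain ⟨ms, hlen, hT⟩ := h B hB
  exact ⟨ms, hlen, Set.union_subset (hB.trans (floodRegion_subset_playMoves B o ms)) hT⟩

end CanCapture

variable {o : Tile n}

lemma canCapture_of_adjT {S : Set (Tile n)} {p q : Tile n} (hp : p ∈ S) (hpq : adjT p q) :
    CanCapture c o 1 S {q} := fun B hB =>
  ⟨[B q], le_rfl, Set.singleton_subset_iff.2 (mem_floodRegion_flood_of_adjT (hB hp) hpq)⟩

lemma canCapture_line (hn : 0 < n) (f : Fin n → Tile n)
    (hf : ∀ a b : Fin n, (a : ℕ) + 1 = b → adjT (f a) (f b)) :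
    CanCapture c o (n - 1) {f ⟨0, hn⟩} (Set.range f) := by
  have hprefix : ∀ d (hd : d < n), CanCapture c o d {f ⟨0, hn⟩} (f '' {j | (j : ℕ) ≤ d}) := by
    intro d
    induction d with
    | zero =>
      refine fun _ => (CanCapture.refl _).mono le_rfl subset_rfl ?_
      rintro _ ⟨j, hj, rfl⟩
      have hj : (j : ℕ) = 0 := Nat.le_zero.mp hj
      exact congrArg f (Fin.ext hj)
    | succ d ih =>
      intro hd
      have hstep : CanCapture c o 1 (f '' {j | (j : ℕ) ≤ d}) {f ⟨d + 1, hd⟩} :=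
        canCapture_of_adjT ⟨⟨d, by omega⟩, show d ≤ d from le_rfl, rfl⟩ (hf _ _ rfl)
      refine (ih (by omega)).trans (hstep.union_left.mono le_rfl subset_rfl ?_)
      rintro _ ⟨j, hj, rfl⟩
      rcases Nat.lt_or_eq_of_le (show (j : ℕ) ≤ d + 1 from hj) with hlt | heq
      · exact Or.inl ⟨j, Nat.le_of_lt_succ hlt, rfl⟩
      · exact Or.inr (congrArg f (Fin.ext heq))
  refine (hprefix (n - 1) (by omega)).mono le_rfl subset_rfl ?_
  rintro _ ⟨j, rfl⟩
  exact ⟨j, show (j : ℕ) ≤ n - 1 by omega, rfl⟩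

lemma canCapture_biUnion {ι : Type*} {m : ℕ} {S : Set (Tile n)} {T : ι → Set (Tile n)}
    (l : List ι) (h : ∀ i ∈ l, CanCapture c o m S (T i)) :
    CanCapture c o (l.length * m) S (S ∪ ⋃ i ∈ l, T i) := by
  induction l with
  | nil => exact (CanCapture.refl S).mono (by simp) subset_rfl (by simp)
  | cons i l ih =>
    have hi := (h i List.mem_cons_self).union_left
    have hl : CanCapture c o (l.length * m) (S ∪ T i) ((S ∪ T i) ∪ (S ∪ ⋃ j ∈ l, T j)) :=
      ((ih fun j hj => h j (List.mem_cons_of_mem i hj)).mono le_rfl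
        Set.subset_union_left subset_rfl).union_left
    refine (hi.trans hl).mono (by rw [List.length_cons, Nat.succ_mul, Nat.add_comm]) subset_rfl ?_
    intro x hx
    simp only [List.mem_cons, Set.mem_union, Set.mem_iUnion, exists_prop] at hx ⊢
    grind

def nbhd (S : Set (Tile n)) : Set (Tile n) := S ∪ {q | ∃ p ∈ S, adjT p q}

lemma canCapture_nbhd (S : Set (Tile n)) : CanCapture c o c S (nbhd S) := by
  intro B hB
  refine ⟨List.finRange c, by simp,
    Set.union_subset (hB.trans (floodRegion_subset_playMoves B o _)) ?_⟩
  rintro q ⟨p, hp, hpq⟩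
  exact mem_floodRegion_playMoves_of_adjT _ (List.mem_finRange _) (hB hp) hpq

lemma canCapture_iterate_nbhd (d : ℕ) (S : Set (Tile n)) :
    CanCapture c o (d * c) S (nbhd^[d] S) := by
  induction d generalizing S with
  | zero => exact (CanCapture.refl S).mono (by simp) subset_rfl subset_rfl
  | succ d ih =>
    rw [Function.iterate_succ_apply]
    exact ((canCapture_nbhd S).trans (ih _)).mono (by rw [Nat.succ_mul]; omega)
      subset_rfl subset_rfl

lemma mem_iterate_nbhd_of_fst {S : Set (Tile n)} {r u : Fin n} (hr : (r, u) ∈ S) {d : ℕ} :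
    ∀ {i : Fin n}, (i : ℕ) ≤ r + d → (r : ℕ) ≤ i + d → (i, u) ∈ nbhd^[d] S := by
  induction d with
  | zero =>
    intro i h₁ h₂
    rwa [Fin.ext (show (i : ℕ) = r by omega)]
  | succ d ih =>
    intro i h₁ h₂
    rw [Function.iterate_succ_apply']
    by_cases hnear : (i : ℕ) ≤ r + d ∧ (r : ℕ) ≤ i + d
    · exact Or.inl (ih hnear.1 hnear.2)
    · rcases Nat.lt_or_ge (i : ℕ) r with hir | hri
      · refine Or.inr ⟨(⟨i + 1, by omega⟩, u), ih (by simp only; omega) (by simp only; omega),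
          adjT_of_fst u (Or.inr rfl)⟩
      · refine Or.inr ⟨(⟨i - 1, by omega⟩, u), ih (by simp only; omega) (by simp only; omega),
          adjT_of_fst u (Or.inl (by simp only; omega))⟩

/-- Row `k * j + k / 2` is the middle row of the `j`-th band of `k` rows (the last one is
clamped to the board). -/
lemma exists_row_near {k i : ℕ} (n : ℕ) (hk : 0 < k) (hi : i < n) :
    ∃ j < n / k + 1, i ≤ min (k * j + k / 2) (n - 1) + k / 2 ∧
      min (k * j + k / 2) (n - 1) ≤ i + k / 2 := by
  refine ⟨i / k, Nat.lt_succ_of_le (Nat.div_le_div_right hi.le), ?_⟩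
  have := Nat.div_add_mod i k
  have := Nat.mod_lt i hk
  omega

theorem canCapture_univ (hn : 0 < n) {k : ℕ} (hk : 0 < k) :
    CanCapture c (⟨0, hn⟩, ⟨0, hn⟩) (n + (n / k + 1) * n + k / 2 * c)
      {(⟨0, hn⟩, ⟨0, hn⟩)} Set.univ := by
  let corner : Tile n := (⟨0, hn⟩, ⟨0, hn⟩)
  let row (r : Fin n) : Set (Tile n) := Set.range fun j => (r, j)
  let col : Set (Tile n) := Set.range fun i => (i, ⟨0, hn⟩)
  let rows : List (Fin n) := (List.range (n / k + 1)).map fun j =>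
    (⟨min (k * j + k / 2) (n - 1), by omega⟩ : Fin n)
  have hcol : CanCapture c corner n {corner} col :=
    (canCapture_line hn _ fun _ _ h => adjT_of_fst _ (Or.inl h)).mono (by omega) subset_rfl
      subset_rfl
  have hrow (r : Fin n) : CanCapture c corner n col (row r) :=
    (canCapture_line hn (fun j => (r, j)) fun _ _ h => adjT_of_snd r (Or.inl h)).mono
      (by omega) (Set.singleton_subset_iff.2 ⟨r, rfl⟩) subset_rfl
  have hrows : CanCapture c corner ((n / k + 1) * n) col (col ∪ ⋃ r ∈ rows, row r) := by
    simpa [rows] using canCapture_biUnion rows fun r _ => hrow r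
  have hcover : Set.univ ⊆ nbhd^[k / 2] (col ∪ ⋃ r ∈ rows, row r) := by
    rintro ⟨i, u⟩ -
    obtain ⟨j, hj, h₁, h₂⟩ := exists_row_near n hk i.isLt
    refine mem_iterate_nbhd_of_fst
      (r := (⟨min (k * j + k / 2) (n - 1), by omega⟩ : Fin n)) ?_ h₁ h₂
    exact Or.inr (Set.mem_iUnion₂.2 ⟨_, List.mem_map.2 ⟨j, List.mem_range.2 hj, rfl⟩, u, rfl⟩)
  exact (hcol.trans hrows).trans
    ((canCapture_iterate_nbhd (k / 2) _).mono le_rfl subset_rfl hcover)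

lemma floodMoves_le_of_canCapture {m : ℕ} (h : CanCapture c o m {o} Set.univ)
    (B : Board n c) : floodMoves B o ≤ m := by
  obtain ⟨ms, hlen, hall⟩ := h B (Set.singleton_subset_iff.2 (show o ∈ floodRegion B o from .refl))
  exact le_trans (Nat.sInf_le ⟨ms, rfl, flooded_of_univ_subset_floodRegion hall⟩) hlen

lemma strategy_cost_le {k : ℕ} (hc : 0 < c) (hk : 2 * n / Real.sqrt (2 * c) ≤ k)
    (hk' : (k : ℝ) < 2 * n / Real.sqrt (2 * c) + 1) :
    ((n + (n / k + 1) * n + k / 2 * c : ℕ) : ℝ) ≤ 2 * n + Real.sqrt (2 * c) * n + c := by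
  set s := Real.sqrt (2 * c)
  have hs : 0 < s := Real.sqrt_pos.2 (by positivity)
  have hss : s * s = 2 * c := Real.mul_self_sqrt (by positivity)
  have hks : 2 * n ≤ k * s := (div_le_iff₀ hs).1 hk
  have hks' : k * s < 2 * n + s := by
    have := mul_lt_mul_of_pos_right hk' hs
    rwa [add_mul, div_mul_cancel₀ _ hs.ne', one_mul] at this
  have hrows : ((n / k : ℕ) : ℝ) ≤ s / 2 :=
    Nat.cast_div_le.trans (div_le_of_le_mul₀ (by positivity) (by positivity) (by linarith))
  have hcycles : ((k / 2 : ℕ) : ℝ) * c ≤ (s * n + c) / 2 := by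
    have : ((k / 2 : ℕ) : ℝ) ≤ k / 2 := Nat.cast_div_le.trans (by norm_num)
    nlinarith
  push_cast
  nlinarith

theorem stmt10_general (n c : ℕ) (hn : 1 ≤ n) (B : Board n c) :
    (floodMoves B (⟨0, hn⟩, ⟨0, hn⟩) : ℝ) ≤ 2 * n + Real.sqrt (2 * c) * n + c := by
  have hc : 0 < c := (B (⟨0, hn⟩, ⟨0, hn⟩)).pos
  have hs : 0 < Real.sqrt (2 * c) := Real.sqrt_pos.2 (by positivity)
  set k := ⌈2 * (n : ℝ) / Real.sqrt (2 * c)⌉₊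
  have hk : 0 < k := Nat.ceil_pos.2 (div_pos (by positivity) hs)
  calc (floodMoves B (⟨0, hn⟩, ⟨0, hn⟩) : ℝ)
      ≤ ((n + (n / k + 1) * n + k / 2 * c : ℕ) : ℝ) :=
        Nat.cast_le.2 (floodMoves_le_of_canCapture (canCapture_univ hn hk) B)
    _ ≤ 2 * n + Real.sqrt (2 * c) * n + c :=
        strategy_cost_le hc (Nat.le_ceil _) (Nat.ceil_lt_add_one (by positivity))

/-- any n×n board with c colours (2 ≤ c ≤ n²) can be flooded in at
most 2n + √(2c)·n + c moves. -/
theorem stmt10 (n c : ℕ) (hn : 1 ≤ n) (hc : 2 ≤ c) (hcn : c ≤ n ^ 2) (B : Board n c) :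
    (floodMoves B (⟨0, hn⟩, ⟨0, hn⟩) : ℝ) ≤ 2 * n + Real.sqrt (2 * c) * n + c :=
  stmt10_general n c hn B
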